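/- Additive approximation bound (Lemma 2 of the paper): suppose (ā, p̄) is optimal for problem P with constraints a_q + R_q(p) ≥ C_q and R̄_q(p) ∈ [(1+ε)^{t_q−1},(1+ε)^{t_q}), and (a', p') is optimal for the problem P' obtained by replacing a_q + R_q(p) ≥ C_q with a_q + t_q·log₂(1+ε) ≥ C_q (keeping the interval constraints). Then Σ_q (a'_q + R_q(p')) ≥ Σ_q (ā_q + R_q(p̄)) − Q·log₂(1+ε). -/
import Mathlib


/-- Additive approximation bound (Lemma 2 of the paper). -/
theorem additive_approximation_bound {P : Type*} (Q : ℕ) (ε : ℝ) (hε : 0 < ε)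
    (X : Set P) (C : Fin Q → ℝ) (t : Fin Q → ℕ) (ht : ∀ q, 1 ≤ t q)
    (Rbar : Fin Q → P → ℝ)
    (hint : ∀ p ∈ X, ∀ q, (1 + ε) ^ (t q - 1) ≤ Rbar q p ∧ Rbar q p < (1 + ε) ^ (t q))
    (abar a' : Fin Q → ℝ) (pbar p' : P)
    -- (abar, pbar) is optimal for problem P
    (hfeasP : pbar ∈ X ∧ ∀ q, C q ≤ abar q + Real.logb 2 (Rbar q pbar))
    (hoptP : ∀ (a : Fin Q → ℝ) (p : P), p ∈ X →
      (∀ q, C q ≤ a q + Real.logb 2 (Rbar q p)) → ∑ q, a q ≤ ∑ q, abar q)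
    -- (a', p') is optimal for the linearized problem P'
    (hfeasP' : p' ∈ X ∧ ∀ q, C q ≤ a' q + (t q : ℝ) * Real.logb 2 (1 + ε))
    (hoptP' : ∀ (a : Fin Q → ℝ) (p : P), p ∈ X →
      (∀ q, C q ≤ a q + (t q : ℝ) * Real.logb 2 (1 + ε)) → ∑ q, a q ≤ ∑ q, a' q) :
    ∑ q, (abar q + Real.logb 2 (Rbar q pbar)) - (Q : ℝ) * Real.logb 2 (1 + ε) ≤
      ∑ q, (a' q + Real.logb 2 (Rbar q p')) := by
  set δ : ℝ := Real.logb 2 (1 + ε) with hδdef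
  have h1ε : (1:ℝ) < 1 + ε := by linarith
  have hδ0 : 0 ≤ δ := Real.logb_nonneg one_lt_two h1ε.le
  -- lower bound on logb of Rbar q p'
  have hlow : ∀ q : Fin Q, ((t q : ℝ) - 1) * δ ≤ Real.logb 2 (Rbar q p') := by
    intro q
    have hle := (hint p' hfeasP'.1 q).1
    have hpos : (0:ℝ) < (1 + ε) ^ (t q - 1) := pow_pos (by linarith) _
    have := Real.logb_le_logb_of_le one_lt_two hpos hle
    calc ((t q : ℝ) - 1) * δ = ((t q - 1 : ℕ) : ℝ) * δ := by
          rw [Nat.cast_sub (ht q)]; push_cast; ring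
      _ = Real.logb 2 ((1 + ε) ^ (t q - 1)) := by rw [Real.logb_pow]
      _ ≤ Real.logb 2 (Rbar q p') := this
  -- a feasible point for P'
  set a : Fin Q → ℝ := fun q => abar q + Real.logb 2 (Rbar q pbar) - (t q : ℝ) * δ with hadef
  have hfa : ∀ q, C q ≤ a q + (t q : ℝ) * δ := by
    intro q
    have := hfeasP.2 q
    simp only [hadef]
    linarith
  have h1 : ∑ q, a q ≤ ∑ q, a' q := hoptP' a pbar hfeasP.1 hfa
  have hsa : ∑ q, a q =
      ∑ q, (abar q + Real.logb 2 (Rbar q pbar)) - ∑ q, (t q : ℝ) * δ := by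
    rw [← Finset.sum_sub_distrib]
  have h2 : ∑ q, ((t q : ℝ) - 1) * δ ≤ ∑ q, Real.logb 2 (Rbar q p') :=
    Finset.sum_le_sum fun q _ => hlow q
  have h3 : ∑ q, ((t q : ℝ) - 1) * δ = ∑ q, (t q : ℝ) * δ - (Q : ℝ) * δ := by
    simp [sub_mul, Finset.sum_sub_distrib]
  simp only [Finset.sum_add_distrib]
  rw [hsa, Finset.sum_add_distrib] at h1
  linarith
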